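/- Let e ≥ 2, let i be a residue modulo e, and let μ be an e-regular partition having exactly k removable nodes of residue i. Let μ̄ be the partition obtained from μ by removing all k of these removable nodes. If μ̄ has exactly k addable nodes of residue i, then μ̄ is e-regular. -/

import Mathlib

/-!
Suppose rows `r, …, r + e - 1` of `μ̄` all have the same nonzero length `m`. A removed node in
row `s + 1` of such a block would force a removed node in row `s` too, leaving `μ s = μ (s + 1)`,
which contradicts removability; so rows `r + 1, …, r + e - 1` of `μ` have length `m`. Since `μ`
is `e`-regular, row `r` must have lost a node of residue `i`, so `μ r = m + 1`, and then
`μ (r + e) < m` by regularity again. But then row `r + e - 1` of `μ` ends in a removable node of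
residue `(m - 1) - (r + e - 1) ≡ m - r ≡ i`, which should have been removed.
-/

def removeRemovableNodes (μ : ℕ → ℕ) (R : ℕ → Prop) [DecidablePred R] (r : ℕ) : ℕ :=
  if μ (r + 1) < μ r ∧ R r then μ r - 1 else μ r

section RemoveRemovableNodes

variable {μ : ℕ → ℕ} {R : ℕ → Prop} [DecidablePred R]

theorem Antitone.removeRemovableNodes (hμ : Antitone μ) :
    Antitone (removeRemovableNodes μ R) := by
  refine antitone_nat_of_succ_le fun s ↦ ?_
  have : μ (s + 1) ≤ μ s := hμ (Nat.le_succ s)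
  unfold _root_.removeRemovableNodes
  split_ifs <;> omega

theorem removeRemovableNodes_succ_of_eq (hμ : Antitone μ) {s : ℕ}
    (h : removeRemovableNodes μ R (s + 1) = removeRemovableNodes μ R s) :
    removeRemovableNodes μ R (s + 1) = μ (s + 1) := by
  have : μ (s + 1) ≤ μ s := hμ (Nat.le_succ s)
  unfold removeRemovableNodes at h ⊢
  split_ifs at h ⊢ <;> omega

theorem apply_add_of_removeRemovableNodes_add_eq (hμ : Antitone μ) {r n j : ℕ}
    (h : removeRemovableNodes μ R (r + n) = removeRemovableNodes μ R r)
    (hj : 1 ≤ j) (hjn : j ≤ n) :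
    μ (r + j) = removeRemovableNodes μ R r := by
  have hanti := hμ.removeRemovableNodes (R := R)
  have hblock : ∀ l ≤ n, removeRemovableNodes μ R (r + l) = removeRemovableNodes μ R r :=
    fun l hl ↦ le_antisymm (hanti (by omega)) (h ▸ hanti (by omega))
  obtain ⟨l, rfl⟩ := Nat.exists_eq_add_of_le' hj
  rw [← hblock (l + 1) hjn, ← add_assoc]
  refine (removeRemovableNodes_succ_of_eq hμ ?_).symm
  rw [add_assoc, hblock (l + 1) hjn, hblock l (by omega)]

end RemoveRemovableNodes

def endResidue (e : ℕ) (μ : ℕ → ℕ) (r : ℕ) : ZMod e :=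
  (((μ r : ℤ) - 1 - (r : ℤ) : ℤ) : ZMod e)

theorem endResidue_add_sub_one {e : ℕ} {μ : ℕ → ℕ} {r : ℕ} (he : 0 < e)
    (h : μ (r + (e - 1)) + 1 = μ r) :
    endResidue e μ (r + (e - 1)) = endResidue e μ r := by
  have hshift : (μ (r + (e - 1)) : ℤ) - 1 - ((r + (e - 1) : ℕ) : ℤ)
      = ((μ r : ℤ) - 1 - r) - e := by
    push_cast; omega
  rw [endResidue, hshift, Int.cast_sub, Int.cast_natCast, ZMod.natCast_self, sub_zero, endResidue]

theorem eRegular_of_remove_all_removable_nodes_general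
    (e : ℕ) (he : 2 ≤ e) (i : ZMod e) (μ : ℕ → ℕ)
    (hμ_dec : Antitone μ)
    (hμ_reg : ∀ r : ℕ, μ (r + (e - 1)) = μ r → μ r = 0)
    (μbar : ℕ → ℕ)
    (hbar : ∀ r : ℕ, μbar r =
      if μ (r + 1) < μ r ∧ (((μ r : ℤ) - 1 - (r : ℤ) : ℤ) : ZMod e) = i
      then μ r - 1 else μ r) :
    ∀ r : ℕ, μbar (r + (e - 1)) = μbar r → μbar r = 0 := by
  set R : ℕ → Prop := fun r ↦ endResidue e μ r = i
  obtain rfl : μbar = removeRemovableNodes μ R := funext hbar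
  intro r hr
  by_contra hm
  have hfirst := apply_add_of_removeRemovableNodes_add_eq hμ_dec hr le_rfl (by omega)
  have hlast := apply_add_of_removeRemovableNodes_add_eq hμ_dec hr (by omega) le_rfl
  by_cases hrow : μ (r + 1) < μ r ∧ R r
  · have hμr : μ r = removeRemovableNodes μ R r + 1 := by
      rw [removeRemovableNodes, if_pos hrow]; omega
    have hbelow : μ (r + (e - 1) + 1) < μ (r + (e - 1)) := by
      have hreg := hμ_reg (r + 1)
      rw [show r + 1 + (e - 1) = r + (e - 1) + 1 by omega] at hreg
      have : μ (r + (e - 1) + 1) ≤ μ (r + (e - 1)) := hμ_dec (by omega)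
      omega
    have hres : R (r + (e - 1)) := (endResidue_add_sub_one (by omega) (by omega)).trans hrow.2
    have hcut : removeRemovableNodes μ R (r + (e - 1)) = μ (r + (e - 1)) - 1 :=
      if_pos ⟨hbelow, hres⟩
    omega
  · have hkeep : removeRemovableNodes μ R r = μ r := if_neg hrow
    exact hm (hkeep ▸ hμ_reg r (hlast.trans hkeep))

/-- Let `e ≥ 2`, let `i` be a residue modulo `e`, and let `μ` be an
`e`-regular partition (written as a weakly decreasing, eventually zero sequence `μ 0 ≥ μ 1 ≥ ⋯`
of nonnegative integers, `μ r` being the `(r+1)`-st part) having exactly `k` removable nodes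
of residue `i`.  Here the node in row `r` and column `c` (both `0`-indexed) has residue
`(c - r) mod e`; the removable node of row `r` exists iff `μ (r+1) < μ r` and sits in column
`μ r - 1`, and the addable node of row `r` exists iff `r = 0` or `μ r < μ (r-1)` and sits in
column `μ r`.  Let `μ̄` be obtained from `μ` by removing all `k` removable nodes of residue
`i`.  If `μ̄` has exactly `k` addable nodes of residue `i`, then `μ̄` is `e`-regular, i.e. it
has no `e` equal nonzero parts. -/
theorem eRegular_of_remove_all_removable_nodes
    (e : ℕ) (he : 2 ≤ e) (i : ZMod e) (μ : ℕ → ℕ)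
    (hμ_dec : Antitone μ) (hμ_fin : ∃ N, μ N = 0)
    (hμ_reg : ∀ r : ℕ, μ (r + (e - 1)) = μ r → μ r = 0)
    (k : ℕ)
    (hrem : {r : ℕ | μ (r + 1) < μ r ∧
      (((μ r : ℤ) - 1 - (r : ℤ) : ℤ) : ZMod e) = i}.ncard = k)
    (μbar : ℕ → ℕ)
    (hbar : ∀ r : ℕ, μbar r =
      if μ (r + 1) < μ r ∧ (((μ r : ℤ) - 1 - (r : ℤ) : ℤ) : ZMod e) = i
      then μ r - 1 else μ r)
    (hadd : {r : ℕ | (r = 0 ∨ μbar r < μbar (r - 1)) ∧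
      (((μbar r : ℤ) - (r : ℤ) : ℤ) : ZMod e) = i}.ncard = k) :
    ∀ r : ℕ, μbar (r + (e - 1)) = μbar r → μbar r = 0 :=
  eRegular_of_remove_all_removable_nodes_general e he i μ hμ_dec hμ_reg μbar hbar
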